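/- arXiv:2111.10703 — 4 statements merged into one kernel-verified Lean document; each statement's English description precedes it below -/
import Mathlib

section
/- Almost-everywhere derivative of the cost-to-go function (abstract form of the paper's Lemma 3): let ι be a nonempty type and a, b : ι → ℝ with 0 ≤ a i and 0 ≤ b i for all i, and define J : ℝ → ℝ by J r = ⨅ i, (a i + r * b i). Suppose σ : ℝ → ι attains the infimum: J r = a (σ r) + r * b (σ r) for all r ≥ 0. Then for Lebesgue-almost every r ∈ Set.Ioi (0:ℝ), J is differentiable at r and deriv J r = b (σ r). -/
open MeasureTheory Filter Set Topology

/-!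
`J` is an infimum of affine functions of `r` with nonnegative slopes, so it is monotone on
`r ≥ 0` and hence (Lebesgue) differentiable almost everywhere. At an interior point `r` where it
is differentiable, the affine function `s ↦ a (σ r) + s * b (σ r)` lies above `J` and touches it
at `r`, so the two derivatives agree there.
-/

theorem MonotoneOn.ae_differentiableAt_of_isOpen {f : ℝ → ℝ} {s : Set ℝ} (hf : MonotoneOn f s)
    (hs : IsOpen s) : ∀ᵐ x, x ∈ s → DifferentiableAt ℝ f x := by
  filter_upwards [hf.ae_differentiableWithinAt_of_mem] with x hdiff hx
  exact (hdiff hx).differentiableAt (hs.mem_nhds hx)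

theorem HasDerivAt.eq_of_eventuallyLE_of_eq {f g : ℝ → ℝ} {f' g' x : ℝ} (hf : HasDerivAt f f' x)
    (hg : HasDerivAt g g' x) (hle : f ≤ᶠ[𝓝 x] g) (heq : f x = g x) : f' = g' := by
  have hmin : IsLocalMin (g - f) x := by
    filter_upwards [hle] with y hy
    simp only [Pi.sub_apply, heq, sub_self, sub_nonneg, hy]
  linarith [hmin.hasDerivAt_eq_zero (hg.sub hf)]

section AffineInfimum

variable {ι : Type*} {a b : ι → ℝ}

theorem bddBelow_range_add_mul (ha : ∀ i, 0 ≤ a i) (hb : ∀ i, 0 ≤ b i) {r : ℝ} (hr : 0 ≤ r) :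
    BddBelow (range fun i => a i + r * b i) :=
  ⟨0, by rintro _ ⟨i, rfl⟩; exact add_nonneg (ha i) (mul_nonneg hr (hb i))⟩

theorem monotoneOn_iInf_add_mul (ha : ∀ i, 0 ≤ a i) (hb : ∀ i, 0 ≤ b i) :
    MonotoneOn (fun r => ⨅ i, (a i + r * b i)) (Ici 0) := fun _ hr _ _ hrs =>
  ciInf_mono (bddBelow_range_add_mul ha hb hr) fun i => by gcongr; exact hb i

end AffineInfimum

theorem gittins_cost_to_go_deriv_ae_general
    {ι : Type*} (a b : ι → ℝ)
    (ha : ∀ i, 0 ≤ a i) (hb : ∀ i, 0 ≤ b i)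
    (J : ℝ → ℝ) (hJ : ∀ r, J r = ⨅ i, (a i + r * b i))
    (σ : ℝ → ι) (hσ : ∀ r : ℝ, 0 ≤ r → J r = a (σ r) + r * b (σ r)) :
    ∀ᵐ r ∂(volume : Measure ℝ), r ∈ Set.Ioi (0 : ℝ) →
      DifferentiableAt ℝ J r ∧ deriv J r = b (σ r) := by
  obtain rfl : J = fun r => ⨅ i, (a i + r * b i) := funext hJ
  have hmono := (monotoneOn_iInf_add_mul ha hb).mono Ioi_subset_Ici_self
  filter_upwards [hmono.ae_differentiableAt_of_isOpen isOpen_Ioi] with r hdiff hr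
  replace hdiff := hdiff hr
  have tangent : HasDerivAt (fun s => a (σ r) + s * b (σ r)) (b (σ r)) r := by
    simpa using ((hasDerivAt_id r).mul_const (b (σ r))).const_add (a (σ r))
  have below_tangent : (fun s => ⨅ i, (a i + s * b i)) ≤ᶠ[𝓝 r]
      fun s => a (σ r) + s * b (σ r) := by
    filter_upwards [isOpen_Ioi.mem_nhds hr] with s hs
    exact ciInf_le (bddBelow_range_add_mul ha hb (le_of_lt hs)) (σ r)
  exact ⟨hdiff,
    hdiff.hasDerivAt.eq_of_eventuallyLE_of_eq tangent below_tangent (hσ r (le_of_lt hr))⟩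

/-- Almost-everywhere derivative of the cost-to-go function (abstract Lemma 3):
if `σ` selects an attaining index for each `r ≥ 0`, then for Lebesgue-a.e. `r > 0`,
`J` is differentiable at `r` with `deriv J r = b (σ r)`. -/
theorem gittins_cost_to_go_deriv_ae
    {ι : Type*} [Nonempty ι] (a b : ι → ℝ)
    (ha : ∀ i, 0 ≤ a i) (hb : ∀ i, 0 ≤ b i)
    (J : ℝ → ℝ) (hJ : ∀ r, J r = ⨅ i, (a i + r * b i))
    (σ : ℝ → ι) (hσ : ∀ r : ℝ, 0 ≤ r → J r = a (σ r) + r * b (σ r)) :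
    ∀ᵐ r ∂(volume : Measure ℝ), r ∈ Set.Ioi (0 : ℝ) →
      DifferentiableAt ℝ J r ∧ deriv J r = b (σ r) :=
  gittins_cost_to_go_deriv_ae_general a b ha hb J hJ σ hσ
end

section
/- Attainment and interval structure of the contact set (abstract form of Lemma 6, characterizing the Gittins rank): let h ≥ 0 and let J : ℝ → ℝ be concave on Set.Ici (0:ℝ), continuous on Set.Ici (0:ℝ), with J 0 = 0 and J r ≤ h * r for all r ≥ 0. Let S = {r : ℝ | 0 ≤ r ∧ J r = h * r}. Then either S = Set.Ici 0, or S is bounded above, sSup S ∈ S, and S = Set.Icc 0 (sSup S). In particular, when S is bounded above, the supremum max {r ≥ 0 | J r = h * r} is attained. -/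
/-!
Since `r ↦ J r - h * r` is concave and nonpositive on `[0, ∞)`, the set where it attains its
maximum `0` is convex, i.e. an interval; it contains `0`, and it is closed because `J` is
continuous. A closed interval of `[0, ∞)` containing `0` is either `[0, ∞)` or `[0, sSup S]`.
-/

open Set

theorem ConcaveOn.convex_setOf_eq_of_le {𝕜 E β : Type*} [Field 𝕜] [LinearOrder 𝕜]
    [AddCommGroup E] [Module 𝕜 E] [AddCommGroup β] [PartialOrder β] [IsOrderedAddMonoid β]
    [Module 𝕜 β] [PosSMulMono 𝕜 β] {s : Set E} {f g : E → β}
    (hf : ConcaveOn 𝕜 s f) (hg : ConvexOn 𝕜 s g) (hfg : ∀ x ∈ s, f x ≤ g x) :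
    Convex 𝕜 {x ∈ s | f x = g x} := by
  convert (hf.sub hg).convex_ge 0 using 1
  ext x
  simp only [mem_ofPred_eq, Pi.sub_apply, sub_nonneg]
  exact ⟨fun ⟨hx, hfgx⟩ => ⟨hx, hfgx.ge⟩, fun ⟨hx, hgfx⟩ => ⟨hx, (hfg x hx).antisymm hgfx⟩⟩

theorem Set.OrdConnected.eq_Ici_or_eq_Icc_csSup {α : Type*} [ConditionallyCompleteLinearOrder α]
    [TopologicalSpace α] [OrderTopology α] {s : Set α} {a : α} (hs : s.OrdConnected)
    (hclosed : IsClosed s) (ha : a ∈ s) (hsub : s ⊆ Ici a) :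
    s = Ici a ∨ (BddAbove s ∧ sSup s ∈ s ∧ s = Icc a (sSup s)) := by
  by_cases hbdd : BddAbove s
  · have hsup : sSup s ∈ s := hclosed.csSup_mem ⟨a, ha⟩ hbdd
    have hsub_Icc : s ⊆ Icc a (sSup s) := fun x hx => ⟨hsub hx, le_csSup hbdd hx⟩
    exact Or.inr ⟨hbdd, hsup, hsub_Icc.antisymm (hs.out ha hsup)⟩
  · refine Or.inl (hsub.antisymm fun x hx => ?_)
    obtain ⟨y, hy, hxy⟩ := not_bddAbove_iff.1 hbdd x
    exact hs.out ha hy ⟨hx, hxy.le⟩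

theorem gittins_contact_set_interval_general
    (h : ℝ) (J : ℝ → ℝ)
    (hconc : ConcaveOn ℝ (Set.Ici (0 : ℝ)) J)
    (hcont : ContinuousOn J (Set.Ici (0 : ℝ)))
    (hJ0 : J 0 = 0)
    (hle : ∀ r : ℝ, 0 ≤ r → J r ≤ h * r) :
    (({r : ℝ | 0 ≤ r ∧ J r = h * r}) = Set.Ici (0 : ℝ)) ∨
      (BddAbove {r : ℝ | 0 ≤ r ∧ J r = h * r} ∧
        sSup {r : ℝ | 0 ≤ r ∧ J r = h * r} ∈ {r : ℝ | 0 ≤ r ∧ J r = h * r} ∧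
        ({r : ℝ | 0 ≤ r ∧ J r = h * r}) =
          Set.Icc 0 (sSup {r : ℝ | 0 ≤ r ∧ J r = h * r})) := by
  have hlinear : ConvexOn ℝ (Ici 0) (fun r => h * r) :=
    (LinearMap.mul ℝ ℝ h).convexOn (convex_Ici 0)
  refine OrdConnected.eq_Ici_or_eq_Icc_csSup ?_ ?_ ⟨le_rfl, by simp [hJ0]⟩ fun r hr => hr.1
  · exact convex_iff_ordConnected.1 (hconc.convex_setOf_eq_of_le hlinear hle)
  · exact isClosed_Ici.isClosed_eq hcont (continuous_const_mul h).continuousOn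

/-- Attainment and interval structure of the contact set (abstract Lemma 6,
characterizing the Gittins rank): the contact set
`S = {r | 0 ≤ r ∧ J r = h * r}` is either all of `[0, ∞)`, or it is bounded above,
contains its supremum, and equals the interval `[0, sSup S]`. -/
theorem gittins_contact_set_interval
    (h : ℝ) (hh : 0 ≤ h) (J : ℝ → ℝ)
    (hconc : ConcaveOn ℝ (Set.Ici (0 : ℝ)) J)
    (hcont : ContinuousOn J (Set.Ici (0 : ℝ)))
    (hJ0 : J 0 = 0)
    (hle : ∀ r : ℝ, 0 ≤ r → J r ≤ h * r) :
    (({r : ℝ | 0 ≤ r ∧ J r = h * r}) = Set.Ici (0 : ℝ)) ∨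
      (BddAbove {r : ℝ | 0 ≤ r ∧ J r = h * r} ∧
        sSup {r : ℝ | 0 ≤ r ∧ J r = h * r} ∈ {r : ℝ | 0 ≤ r ∧ J r = h * r} ∧
        ({r : ℝ | 0 ≤ r ∧ J r = h * r}) =
          Set.Icc 0 (sSup {r : ℝ | 0 ≤ r ∧ J r = h * r})) :=
  gittins_contact_set_interval_general h J hconc hcont hJ0 hle
end

section
/- Integral identity for the cost-to-go function (core of Theorem 4, the r-work/holding-cost relation): let J, t, h : ℝ → ℝ and L₀, L∞ : ℝ satisfy, for every r > 0: J r = t r + r * h r, t r ≥ 0, and HasDerivAt J (h r) r. Assume (fun r => J r / r) tends to L₀ along nhdsWithin 0 (Set.Ioi 0) and tends to L∞ along Filter.atTop. Then the function r ↦ t r / r ^ 2 is integrable on Set.Ioi (0:ℝ) with respect to Lebesgue measure, and ∫ r in Set.Ioi 0, t r / r ^ 2 = L₀ − L∞. -/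
open Filter MeasureTheory

/-- Integral identity for the cost-to-go function (core of Theorem 4, the
r-work/holding-cost relation): if `J r = t r + r * h r` with `t r ≥ 0` and
`J' = h` on `(0, ∞)`, and `J r / r → L₀` as `r → 0⁺` and `J r / r → L∞` as `r → ∞`,
then `r ↦ t r / r²` is Lebesgue-integrable on `(0, ∞)` and
`∫₀^∞ t r / r² dr = L₀ − L∞`. -/
theorem gittins_r_work_integral
    (J t h : ℝ → ℝ) (L₀ Linf : ℝ)
    (hdecomp : ∀ r : ℝ, 0 < r → J r = t r + r * h r)
    (ht : ∀ r : ℝ, 0 < r → 0 ≤ t r)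
    (hderiv : ∀ r : ℝ, 0 < r → HasDerivAt J (h r) r)
    (hL₀ : Tendsto (fun r => J r / r) (nhdsWithin 0 (Set.Ioi (0 : ℝ))) (nhds L₀))
    (hLinf : Tendsto (fun r => J r / r) atTop (nhds Linf)) :
    IntegrableOn (fun r => t r / r ^ 2) (Set.Ioi (0 : ℝ)) volume ∧
      ∫ r in Set.Ioi (0 : ℝ), t r / r ^ 2 = L₀ - Linf := by
  -- The auxiliary function G r = -(J r / r) for r > 0, extended by -L₀ at 0.
  set G : ℝ → ℝ := fun r => if 0 < r then -(J r / r) else -L₀ with hG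
  have hGderiv : ∀ x ∈ Set.Ioi (0 : ℝ), HasDerivAt G (t x / x ^ 2) x := by
    intro x hx
    have hx' : (0 : ℝ) < x := hx
    have hd : HasDerivAt (fun r => -(J r / r)) (-((h x * x - J x * 1) / x ^ 2)) x :=
      (((hderiv x hx').div (hasDerivAt_id x) hx'.ne')).neg
    have heq : -((h x * x - J x * 1) / x ^ 2) = t x / x ^ 2 := by
      rw [hdecomp x hx']
      field_simp
      ring
    rw [heq] at hd
    apply hd.congr_of_eventuallyEq
    filter_upwards [eventually_gt_nhds hx'] with y hy
    simp [hG, hy]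
  have hGcont : ContinuousWithinAt G (Set.Ici (0 : ℝ)) 0 := by
    have h1 : Tendsto G (nhdsWithin 0 (Set.Ioi (0 : ℝ))) (nhds (-L₀)) := by
      apply hL₀.neg.congr'
      filter_upwards [self_mem_nhdsWithin] with y hy
      simp [hG, Set.mem_Ioi.mp hy]
    have h2 : Tendsto G (nhdsWithin 0 ({0} : Set ℝ)) (nhds (-L₀)) := by
      rw [nhdsWithin_singleton]
      have : G 0 = -L₀ := by simp [hG]
      rw [← this]
      exact tendsto_pure_nhds G 0
    have : (Set.Ici (0 : ℝ)) = {0} ∪ Set.Ioi 0 := by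
      ext y; simp [le_iff_lt_or_eq, or_comm, eq_comm]
    unfold ContinuousWithinAt
    rw [this, nhdsWithin_union]
    have : G 0 = -L₀ := by simp [hG]
    rw [this]
    exact Tendsto.sup h2 h1
  have hGtop : Tendsto G atTop (nhds (-Linf)) := by
    apply hLinf.neg.congr'
    filter_upwards [eventually_gt_atTop (0 : ℝ)] with y hy
    simp [hG, hy]
  have hpos : ∀ x ∈ Set.Ioi (0 : ℝ), 0 ≤ t x / x ^ 2 := fun x hx =>
    div_nonneg (ht x hx) (sq_nonneg x)
  have hint : IntegrableOn (fun r => t r / r ^ 2) (Set.Ioi (0 : ℝ)) volume :=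
    integrableOn_Ioi_deriv_of_nonneg hGcont hGderiv hpos hGtop
  refine ⟨hint, ?_⟩
  have := integral_Ioi_of_hasDerivAt_of_tendsto hGcont hGderiv hint hGtop
  rw [this]
  simp [hG]
  ring
end

section
/- Integral identity for the infimum of an affine family along an optimal selection: let ι be a nonempty type and a, b : ι → ℝ with 0 ≤ a i and 0 ≤ b i for all i, and define J : ℝ → ℝ by J r = ⨅ i, (a i + r * b i). Suppose there is B ≥ 0 with b i ≤ B for all i, and σ : ℝ → ι attains the infimum: J r = a (σ r) + r * b (σ r) for all r ≥ 0. Assume (fun r => J r / r) tends to L₀ along nhdsWithin 0 (Set.Ioi 0) and tends to L∞ along Filter.atTop. Then the function r ↦ a (σ r) / r ^ 2 is integrable on Set.Ioi (0:ℝ) with respect to Lebesgue measure, and ∫ r in Set.Ioi 0, a (σ r) / r ^ 2 = L₀ − L∞. -/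
/-!
Put `u = r⁻¹`. Then `K u = J u⁻¹ / u⁻¹ = ⨅ i, (a i * u + b i)` is concave in `u`, and the slope
`a (σ u⁻¹)` of an optimal affine piece is a supergradient of `K` at `u`. A supergradient is
antitone, so it is continuous off a countable set, and there it is the derivative of `K`; the
fundamental theorem of calculus (off a countable set) then gives `∫ₚ^q a (σ u⁻¹) du = K q - K p`.
Letting `[p, q]` exhaust `(0, ∞)` gives `L₀ - L∞`, and substituting back `u = r⁻¹` produces the
weight `1 / r²`.
-/

open Filter MeasureTheory Set Topology

def IsSupergradientOn (K D : ℝ → ℝ) (s : Set ℝ) : Prop :=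
  ∀ v ∈ s, ∀ w ∈ s, K w ≤ K v + D v * (w - v)

namespace IsSupergradientOn

variable {K D : ℝ → ℝ} {s : Set ℝ} {v w p q : ℝ}

theorem mul_sub_le_sub (h : IsSupergradientOn K D s) (hv : v ∈ s) (hw : w ∈ s) :
    D w * (w - v) ≤ K w - K v := by
  linarith [h w hw v hv]

theorem antitoneOn (h : IsSupergradientOn K D s) : AntitoneOn D s := by
  intro v hv w hw hvw
  rcases hvw.eq_or_lt with rfl | hlt
  · rfl
  refine le_of_mul_le_mul_right ?_ (sub_pos.2 hlt)
  linarith [h.mul_sub_le_sub hv hw, h v hv w hw]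

theorem abs_sub_sub_mul_le (h : IsSupergradientOn K D s) (hv : v ∈ s) (hw : w ∈ s) :
    |K w - K v - D v * (w - v)| ≤ |D w - D v| * |w - v| := by
  have hlow := h.mul_sub_le_sub hv hw
  have hup := h v hv w hw
  calc |K w - K v - D v * (w - v)| = -(K w - K v - D v * (w - v)) := abs_of_nonpos (by linarith)
    _ ≤ -((D w - D v) * (w - v)) := by linarith
    _ ≤ |D w - D v| * |w - v| := abs_mul (D w - D v) (w - v) ▸ neg_le_abs _

theorem hasDerivAt (h : IsSupergradientOn K D s) (hs : s ∈ 𝓝 v) (hD : ContinuousAt D v) :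
    HasDerivAt K (D v) v := by
  rw [hasDerivAt_iff_tendsto]
  refine squeeze_zero' (Eventually.of_forall fun w => by positivity) ?_
    (tendsto_iff_norm_sub_tendsto_zero.1 hD)
  filter_upwards [hs] with w hw
  rw [Real.norm_eq_abs, Real.norm_eq_abs, Real.norm_eq_abs, smul_eq_mul, mul_comm (w - v) (D v)]
  rcases eq_or_ne w v with rfl | hne
  · simp
  rw [inv_mul_le_iff₀ (abs_pos.2 (sub_ne_zero.2 hne)), mul_comm |w - v|]
  exact h.abs_sub_sub_mul_le (mem_of_mem_nhds hs) hw

theorem lipschitzOnWith (h : IsSupergradientOn K D s) (hs : Icc p q ⊆ s) :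
    LipschitzOnWith (max |D q| |D p|).toNNReal K (Icc p q) := by
  have hD : ∀ x ∈ Icc p q, |D x| ≤ max |D q| |D p| := fun x hx =>
    abs_le_max_abs_abs (h.antitoneOn (hs hx) (hs ⟨hx.1.trans hx.2, le_rfl⟩) hx.2)
      (h.antitoneOn (hs ⟨le_rfl, hx.1.trans hx.2⟩) (hs hx) hx.1)
  refine LipschitzOnWith.of_dist_le_mul fun w hw v hv => ?_
  rw [Real.dist_eq, Real.dist_eq, Real.coe_toNNReal _ (by positivity)]
  calc |K w - K v| ≤ max |D w * (w - v)| |D v * (w - v)| :=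
        abs_le_max_abs_abs (h.mul_sub_le_sub (hs hv) (hs hw)) (by linarith [h v (hs hv) w (hs hw)])
    _ = max |D w| |D v| * |w - v| := by rw [abs_mul, abs_mul, max_mul_of_nonneg _ _ (abs_nonneg _)]
    _ ≤ max |D q| |D p| * |w - v| :=
        mul_le_mul_of_nonneg_right (max_le (hD w hw) (hD v hv)) (abs_nonneg _)

theorem integral_eq_sub (h : IsSupergradientOn K D s) (hpq : p ≤ q) (hs : Icc p q ⊆ s) :
    ∫ x in p..q, D x = K q - K p := by
  have hanti : AntitoneOn D (Icc p q) := h.antitoneOn.mono hs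
  refine integral_eq_of_hasDerivAt_off_countable_of_le K D hpq
    hanti.countable_not_continuousWithinAt (h.lipschitzOnWith hs).continuousOn ?_
    (AntitoneOn.intervalIntegrable (by rwa [uIcc_of_le hpq]))
  rintro x ⟨hx, hcont⟩
  have hIcc : Icc p q ∈ 𝓝 x := Icc_mem_nhds hx.1 hx.2
  refine h.hasDerivAt (mem_of_superset hIcc hs) ?_
  by_contra hdisc
  exact hcont ⟨Ioo_subset_Icc_self hx, fun hw => hdisc (hw.continuousAt hIcc)⟩

theorem integrableOn_Ioi_and_integral_Ioi {x₀ c d : ℝ} (h : IsSupergradientOn K D (Ioi x₀))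
    (hD : ∀ x ∈ Ioi x₀, 0 ≤ D x) (hc : Tendsto K (𝓝[>] x₀) (𝓝 c)) (hd : Tendsto K atTop (𝓝 d)) :
    IntegrableOn D (Ioi x₀) ∧ ∫ x in Ioi x₀, D x = d - c := by
  set α : ℕ → ℝ := fun n => x₀ + ((n : ℝ) + 1)⁻¹
  set β : ℕ → ℝ := fun n => x₀ + ((n : ℝ) + 1)
  have hα : ∀ n, x₀ < α n := fun n => lt_add_of_pos_right _ (by positivity)
  have hαβ : ∀ n, α n ≤ β n := fun n => by
    have hn : (1 : ℝ) ≤ n + 1 := le_add_of_nonneg_left n.cast_nonneg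
    exact add_le_add le_rfl ((inv_le_one_of_one_le₀ hn).trans hn)
  have hα_lim : Tendsto α atTop (𝓝[>] x₀) := tendsto_nhdsWithin_iff.2
    ⟨by simpa using tendsto_one_div_add_atTop_nhds_zero_nat.const_add x₀, .of_forall hα⟩
  have hβ_lim : Tendsto β atTop atTop :=
    tendsto_atTop_add_const_left _ _ (tendsto_atTop_add_const_right _ _ tendsto_natCast_atTop_atTop)
  have hsub : ∀ n, Icc (α n) (β n) ⊆ Ioi x₀ := fun n x hx => (hα n).trans_le hx.1
  have hcover : AECover (volume.restrict (Ioi x₀)) atTop fun n => Ioc (α n) (β n) := by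
    simpa only [Ioi_inter_Iic] using
      (aecover_Ioi_of_Ioi (tendsto_nhdsWithin_iff.1 hα_lim).1).inter (aecover_Iic hβ_lim)
  have hrestrict : ∀ n, (volume.restrict (Ioi x₀)).restrict (Ioc (α n) (β n)) =
      volume.restrict (Ioc (α n) (β n)) := fun n => by
    rw [Measure.restrict_restrict measurableSet_Ioc,
      inter_eq_left.2 (Ioc_subset_Icc_self.trans (hsub n))]
  have hfi : ∀ n, IntegrableOn D (Ioc (α n) (β n)) (volume.restrict (Ioi x₀)) := fun n => by
    rw [IntegrableOn, hrestrict]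
    have hanti : AntitoneOn D (uIcc (α n) (β n)) := by
      rw [uIcc_of_le (hαβ n)]; exact h.antitoneOn.mono (hsub n)
    exact hanti.intervalIntegrable.1
  have hlim : Tendsto (fun n => ∫ x in Ioc (α n) (β n), D x ∂volume.restrict (Ioi x₀)) atTop
      (𝓝 (d - c)) := by
    refine ((hd.comp hβ_lim).sub (hc.comp hα_lim)).congr fun n => ?_
    rw [hrestrict, ← intervalIntegral.integral_of_le (hαβ n), h.integral_eq_sub (hαβ n) (hsub n)]
    rfl
  have hnonneg : 0 ≤ᵐ[volume.restrict (Ioi x₀)] D := (ae_restrict_mem measurableSet_Ioi).mono hD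
  exact ⟨hcover.integrable_of_integral_tendsto_of_nonneg_ae _ hfi hnonneg hlim,
    hcover.integral_eq_of_tendsto_of_nonneg_ae _ hnonneg hfi hlim⟩

end IsSupergradientOn

theorem abs_mul_rpow_smul_comp_rpow_neg_one (f : ℝ → ℝ) :
    (fun x : ℝ => (|(-1 : ℝ)| * x ^ ((-1 : ℝ) - 1)) • f (x ^ (-1 : ℝ))) =
      fun x => f x⁻¹ / x ^ 2 := by
  funext x
  have h : (-1 : ℝ) - 1 = ((-2 : ℤ) : ℝ) := by norm_num
  rw [h, Real.rpow_intCast, Real.rpow_neg_one, smul_eq_mul, abs_neg, abs_one, one_mul, zpow_neg,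
    div_eq_inv_mul]
  norm_cast

theorem integrableOn_Ioi_comp_inv_div_sq_iff (f : ℝ → ℝ) :
    IntegrableOn (fun x => f x⁻¹ / x ^ 2) (Ioi 0) ↔ IntegrableOn f (Ioi 0) := by
  rw [← abs_mul_rpow_smul_comp_rpow_neg_one, integrableOn_Ioi_comp_rpow_iff f (by norm_num)]

theorem integral_Ioi_comp_inv_div_sq (f : ℝ → ℝ) :
    ∫ x in Ioi 0, f x⁻¹ / x ^ 2 = ∫ x in Ioi 0, f x := by
  rw [← abs_mul_rpow_smul_comp_rpow_neg_one, integral_comp_rpow_Ioi f (by norm_num)]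

theorem isSupergradientOn_div_comp_inv {ι : Type*} {a b : ι → ℝ} {J : ℝ → ℝ} {σ : ℝ → ι}
    (hJ : ∀ r, 0 < r → ∀ i, J r ≤ a i + r * b i)
    (hσ : ∀ r, 0 < r → J r = a (σ r) + r * b (σ r)) :
    IsSupergradientOn (fun u => J u⁻¹ / u⁻¹) (fun u => a (σ u⁻¹)) (Ioi 0) := by
  intro v (hv : 0 < v) w (hw : 0 < w)
  calc J w⁻¹ / w⁻¹ ≤ (a (σ v⁻¹) + w⁻¹ * b (σ v⁻¹)) / w⁻¹ := by
        gcongr; exact hJ _ (inv_pos.2 hw) _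
    _ = (a (σ v⁻¹) + v⁻¹ * b (σ v⁻¹)) / v⁻¹ + a (σ v⁻¹) * (w - v) := by
        field_simp; ring
    _ = J v⁻¹ / v⁻¹ + a (σ v⁻¹) * (w - v) := by rw [hσ _ (inv_pos.2 hv)]

theorem gittins_r_work_integral_of_selection_general
    {ι : Type*} (a b : ι → ℝ)
    (ha : ∀ i, 0 ≤ a i) (hb : ∀ i, 0 ≤ b i)
    (J : ℝ → ℝ) (hJ : ∀ r, J r = ⨅ i, (a i + r * b i))
    (σ : ℝ → ι) (hσ : ∀ r : ℝ, 0 ≤ r → J r = a (σ r) + r * b (σ r))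
    (L₀ Linf : ℝ)
    (hL₀ : Tendsto (fun r => J r / r) (nhdsWithin 0 (Set.Ioi (0 : ℝ))) (nhds L₀))
    (hLinf : Tendsto (fun r => J r / r) atTop (nhds Linf)) :
    IntegrableOn (fun r => a (σ r) / r ^ 2) (Set.Ioi (0 : ℝ)) volume ∧
      ∫ r in Set.Ioi (0 : ℝ), a (σ r) / r ^ 2 = L₀ - Linf := by
  have hJ_le : ∀ r, 0 < r → ∀ i, J r ≤ a i + r * b i := fun r hr i => by
    rw [hJ r]
    exact ciInf_le ⟨0, by rintro _ ⟨j, rfl⟩; exact add_nonneg (ha j) (mul_nonneg hr.le (hb j))⟩ i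
  have hsuper := isSupergradientOn_div_comp_inv hJ_le fun r hr => hσ r hr.le
  obtain ⟨hint, heq⟩ := hsuper.integrableOn_Ioi_and_integral_Ioi (fun u _ => ha _)
    (hLinf.comp tendsto_inv_nhdsGT_zero) (hL₀.comp tendsto_inv_atTop_nhdsGT_zero)
  have hF : (fun r => a (σ r) / r ^ 2) = fun r => a (σ r⁻¹⁻¹) / r ^ 2 := by simp_rw [inv_inv]
  rw [hF]
  exact ⟨(integrableOn_Ioi_comp_inv_div_sq_iff fun u => a (σ u⁻¹)).2 hint,
    (integral_Ioi_comp_inv_div_sq fun u => a (σ u⁻¹)).trans heq⟩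

/-- Integral identity for the infimum of an affine family along an optimal selection
(abstract form of the paper's identity `h(x) = ∫₀^∞ t(x,r)/r² dr`): with
`J r = ⨅ i, (a i + r * b i)`, `b` bounded by `B`, and `σ` an attaining selection,
if `J r / r → L₀` as `r → 0⁺` and `J r / r → L∞` as `r → ∞`, then
`r ↦ a (σ r) / r²` is Lebesgue-integrable on `(0, ∞)` and its integral is `L₀ − L∞`. -/
theorem gittins_r_work_integral_of_selection
    {ι : Type*} [Nonempty ι] (a b : ι → ℝ)
    (ha : ∀ i, 0 ≤ a i) (hb : ∀ i, 0 ≤ b i)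
    (J : ℝ → ℝ) (hJ : ∀ r, J r = ⨅ i, (a i + r * b i))
    (B : ℝ) (hB : 0 ≤ B) (hbB : ∀ i, b i ≤ B)
    (σ : ℝ → ι) (hσ : ∀ r : ℝ, 0 ≤ r → J r = a (σ r) + r * b (σ r))
    (L₀ Linf : ℝ)
    (hL₀ : Tendsto (fun r => J r / r) (nhdsWithin 0 (Set.Ioi (0 : ℝ))) (nhds L₀))
    (hLinf : Tendsto (fun r => J r / r) atTop (nhds Linf)) :
    IntegrableOn (fun r => a (σ r) / r ^ 2) (Set.Ioi (0 : ℝ)) volume ∧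
      ∫ r in Set.Ioi (0 : ℝ), a (σ r) / r ^ 2 = L₀ - Linf :=
  gittins_r_work_integral_of_selection_general a b ha hb J hJ σ hσ L₀ Linf hL₀ hLinf
end
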